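/- Consider an SRLK steady-state branch whose limiting components are indexed by a subset I ⊆ {1, …, n} of cardinality r ≥ 1, i.e. there is N° > 0 with N_i = N° for all i ∈ I and N_i > N° for all i ∉ I. Then for each i ∈ I there exists a constant c_i > 0 such that L^{1/r}·x_i(L) → c_i as L → +∞, and for each i ∈ {1, …, n} with i ∉ I there exists a constant c_i > 0 such that x_i(L) → c_i as L → +∞. -/

import Mathlib

/-! SRLK model with `n+1` trans-membrane chains `X_1, …, X_{n+1}` (indexed by
`Fin (n+1)`, so the paper's "`n ≥ 1` chains" corresponds to `n+1` here), an extrinsic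
kinase `Z` with affinity `K0`, signalling affinities `K i`, dummy affinities `K' i`,
and total copy numbers `Nz` and `N i`. -/

/-- The signalling function `σ = K0·z·L·Π_j (K_j·x_j)`. -/
def srlkSigma (n : ℕ) (K0 : ℝ) (K : Fin (n+1) → ℝ) (z L : ℝ)
    (x : Fin (n+1) → ℝ) : ℝ :=
  K0 * z * L * ∏ j, (K j * x j)

/-- The dummy function `δ = L·Π_j (K'_j·x_j)`. -/
def srlkDelta (n : ℕ) (K' : Fin (n+1) → ℝ) (L : ℝ) (x : Fin (n+1) → ℝ) : ℝ :=
  L * ∏ j, (K' j * x j)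

/-- The SRLK steady-state equations at ligand concentration `L`. -/
def srlkSteady (n : ℕ) (K0 : ℝ) (K K' : Fin (n+1) → ℝ) (Nz : ℝ)
    (N : Fin (n+1) → ℝ) (L z : ℝ) (x : Fin (n+1) → ℝ) : Prop :=
  Nz = z + K0 * z * (x 0 + ∑ j ∈ Finset.Ioi (0 : Fin (n+1)),
      (∏ l ∈ Finset.Iio j, (K l * x l)) * x j) + srlkSigma n K0 K z L x ∧
  N 0 = x 0 + (∑ j ∈ Finset.Ioi (0 : Fin (n+1)),
        (∏ l ∈ Finset.Iio j, (K' l * x l)) * x j)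
      + srlkDelta n K' L x
      + K0 * z * (x 0 + ∑ j ∈ Finset.Ioi (0 : Fin (n+1)),
        (∏ l ∈ Finset.Iio j, (K l * x l)) * x j)
      + srlkSigma n K0 K z L x ∧
  ∀ i : Fin (n+1), 0 < i →
    N i = x i + (∑ j ∈ Finset.Ici i,
        ((∏ l ∈ Finset.Iio j, (K' l * x l)) * x j
          + K0 * z * (∏ l ∈ Finset.Iio j, (K l * x l)) * x j))
      + srlkDelta n K' L x + srlkSigma n K0 K z L x

/-- `f` is an algebraic function on `(0, ∞)`: it satisfies a monic polynomial equation
whose coefficients are rational functions with denominators nowhere vanishing on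
`(0, ∞)`. -/
def AlgebraicOnIoi (f : ℝ → ℝ) : Prop :=
  ∃ m : ℕ, 1 ≤ m ∧ ∃ p q : Fin m → Polynomial ℝ,
    (∀ i : Fin m, ∀ L : ℝ, 0 < L → (q i).eval L ≠ 0) ∧
    ∀ L : ℝ, 0 < L →
      f L ^ m + ∑ i : Fin m, ((p i).eval L / (q i).eval L) * f L ^ (i : ℕ) = 0

/-- An SRLK steady-state branch: continuous positive functions `z, x_1, …, x_{n+1}` on
`(0, ∞)` satisfying the SRLK steady-state equations for every `L > 0`, with
`z`, each `x_i`, `σ` and `δ` bounded and algebraic on `(0, ∞)`. -/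
structure SRLKBranch (n : ℕ) (K0 : ℝ) (K K' : Fin (n+1) → ℝ) (Nz : ℝ)
    (N : Fin (n+1) → ℝ) (z : ℝ → ℝ) (x : Fin (n+1) → ℝ → ℝ) : Prop where
  contZ : ContinuousOn z (Set.Ioi 0)
  contX : ∀ i, ContinuousOn (x i) (Set.Ioi 0)
  posZ : ∀ L : ℝ, 0 < L → 0 < z L
  posX : ∀ i, ∀ L : ℝ, 0 < L → 0 < x i L
  steady : ∀ L : ℝ, 0 < L → srlkSteady n K0 K K' Nz N L (z L) (fun i => x i L)
  bddZ : ∃ C : ℝ, ∀ L : ℝ, 0 < L → |z L| ≤ C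
  bddX : ∀ i, ∃ C : ℝ, ∀ L : ℝ, 0 < L → |x i L| ≤ C
  bddSigma : ∃ C : ℝ, ∀ L : ℝ, 0 < L →
    |srlkSigma n K0 K (z L) L (fun i => x i L)| ≤ C
  bddDelta : ∃ C : ℝ, ∀ L : ℝ, 0 < L → |srlkDelta n K' L (fun i => x i L)| ≤ C
  algZ : AlgebraicOnIoi z
  algX : ∀ i, AlgebraicOnIoi (x i)
  algSigma : AlgebraicOnIoi (fun L => srlkSigma n K0 K (z L) L (fun i => x i L))
  algDelta : AlgebraicOnIoi (fun L => srlkDelta n K' L (fun i => x i L))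

/-! A bounded continuous algebraic function on `(0, ∞)` converges at `+∞`: if its `liminf` and
`limsup` differed, every value in between would be taken at arbitrarily large `L`, but clearing
denominators shows that a value taken infinitely often is a root of one fixed monic polynomial.
So `z`, `x_i`, `δ` and `σ` have limits `ζ`, `ξ_i`, `d`, `s`.

The steady-state equations read `N_i = x_i w_i + ∑_{j > i} x_j c_j + δ + σ`, where `c_j` contains
the factor `x_l` for every `l < j`. In the limit this gives `N_i ≥ ξ_i + d + s`, with equality as
soon as `ξ_i = 0`; hence a chain whose `x_i` tends to `0` is limiting, and the other chains have
positive limits. Since `δ = L ∏ K'_j x_j` stays bounded, some `ξ_i` vanishes, so `d + s` is a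
value of `N`, and `d > 0` because `s` is a multiple of `d`. For limiting chains `i < j` the
difference of their equations is `x_j = x_i ρ_{ij}` with `ρ_{ij}` tending to a limit `≥ 1`. So
`L ∏ x_j → d / ∏ K'_j > 0` forces `L x_i ^ r` to a positive limit. -/

open Filter Topology Polynomial Finset

theorem Polynomial.eqOn_zero_of_infinite_add_sum_div {K ι : Type*} [Field K] [Fintype ι]
    (r : K[X]) (p q : ι → K[X]) {S : Set K} (hq : ∀ i, ∀ a ∈ S, (q i).eval a ≠ 0)
    (h : {a ∈ S | r.eval a + ∑ i, (p i).eval a / (q i).eval a = 0}.Infinite) :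
    ∀ a ∈ S, r.eval a + ∑ i, (p i).eval a / (q i).eval a = 0 := by
  classical
  set G : K[X] := r * ∏ i, q i + ∑ i, p i * ∏ k ∈ univ.erase i, q k
  have hG : ∀ a ∈ S,
      G.eval a = (r.eval a + ∑ i, (p i).eval a / (q i).eval a) * ∏ i, (q i).eval a := by
    intro a ha
    simp only [G, eval_add, eval_mul, eval_prod, eval_finsetSum, add_mul, sum_mul]
    congr 1
    refine sum_congr rfl fun i _ => ?_
    rw [← mul_prod_erase _ _ (mem_univ i)]
    field_simp [hq i a ha]
  have hG0 : G = 0 := G.eq_zero_of_infinite_isRoot <| h.mono fun a (ha : a ∈ S ∧ _) => by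
    simp [IsRoot, hG a ha.1, ha.2]
  intro a ha
  have hGa := hG a ha
  rw [hG0, eval_zero, eq_comm, mul_eq_zero] at hGa
  exact hGa.resolve_right (prod_ne_zero_iff.2 fun i _ => hq i a ha)

theorem AlgebraicOnIoi.finite_setOf_frequently_eq {f : ℝ → ℝ} (hf : AlgebraicOnIoi f) :
    {y | ∃ᶠ L in atTop, f L = y}.Finite := by
  obtain ⟨m, -, p, q, hq, hfpq⟩ := hf
  set H : ℝ[X] := X ^ m + ∑ i : Fin m, C ((p i).eval 1 / (q i).eval 1) * X ^ (i : ℕ)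
  have hH : H ≠ 0 := (monic_X_pow_add (degree_sum_fin_lt _)).ne_zero
  refine H.roots.toFinset.finite_toSet.subset fun y hy => ?_
  have hinf : {L | 0 < L ∧ f L = y}.Infinite :=
    frequently_cofinite_iff_infinite.1 <|
      ((eventually_gt_atTop 0).and_frequently hy).filter_mono atTop_le_cofinite
  have key := Polynomial.eqOn_zero_of_infinite_add_sum_div (C (y ^ m))
    (fun i : Fin m => C (y ^ (i : ℕ)) * p i) q (S := Set.Ioi 0) hq
    (hinf.mono fun L (hL : 0 < L ∧ f L = y) =>
      ⟨hL.1, by simpa [hL.2, mul_div_assoc, mul_comm] using hfpq L hL.1⟩)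
    1 (Set.mem_Ioi.2 one_pos)
  rw [mem_coe, Multiset.mem_toFinset, mem_roots hH, IsRoot.def]
  simp only [eval_mul, eval_C] at key
  simp only [H, eval_add, eval_pow, eval_X, eval_finsetSum, eval_mul, eval_C, ← key]
  exact congrArg _ (sum_congr rfl fun i _ => by ring)

theorem frequently_eq_of_liminf_lt_of_lt_limsup {f : ℝ → ℝ} {a y : ℝ}
    (hf : ContinuousOn f (Set.Ioi a)) (hub : IsBoundedUnder (· ≤ ·) atTop f)
    (hlb : IsBoundedUnder (· ≥ ·) atTop f) (hlow : liminf f atTop < y)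
    (hup : y < limsup f atTop) : ∃ᶠ L in atTop, f L = y := by
  refine frequently_atTop.2 fun M => ?_
  obtain ⟨L₁, hL₁, hfL₁⟩ := frequently_atTop.1
    (frequently_lt_of_liminf_lt hub.isCoboundedUnder_ge hlow) (max M (a + 1))
  obtain ⟨L₂, hL₂, hfL₂⟩ := frequently_atTop.1
    (frequently_lt_of_lt_limsup hlb.isCoboundedUnder_le hup) (max M (a + 1))
  have hsub : Set.uIcc L₁ L₂ ⊆ Set.Ici (max M (a + 1)) := fun t ht =>
    (le_min hL₁ hL₂).trans ht.1
  obtain ⟨L, hL, hfL⟩ := intermediate_value_uIcc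
    (hf.mono fun t ht => (lt_add_one a).trans_le ((le_max_right _ _).trans (hsub ht)))
    (Set.mem_uIcc_of_le hfL₁.le hfL₂.le)
  exact ⟨L, (le_max_left _ _).trans (hsub hL), hfL⟩

theorem exists_tendsto_atTop_of_finite_setOf_frequently_eq {f : ℝ → ℝ} {a : ℝ}
    (hf : ContinuousOn f (Set.Ioi a)) (hub : IsBoundedUnder (· ≤ ·) atTop f)
    (hlb : IsBoundedUnder (· ≥ ·) atTop f) (hfin : {y | ∃ᶠ L in atTop, f L = y}.Finite) :
    ∃ c, Tendsto f atTop (𝓝 c) := by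
  obtain heq | hlt := (liminf_le_limsup hub hlb).eq_or_lt
  · exact ⟨_, tendsto_of_liminf_eq_limsup heq rfl hub hlb⟩
  · exact absurd (hfin.subset fun y hy => frequently_eq_of_liminf_lt_of_lt_limsup hf hub hlb
      hy.1 hy.2) (Set.Ioo_infinite hlt)

theorem AlgebraicOnIoi.exists_tendsto_atTop {f : ℝ → ℝ} (hf : AlgebraicOnIoi f)
    (hc : ContinuousOn f (Set.Ioi 0)) (hb : ∃ C, ∀ L : ℝ, 0 < L → |f L| ≤ C) :
    ∃ c, Tendsto f atTop (𝓝 c) := by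
  obtain ⟨C, hC⟩ := hb
  have hbdd : ∀ᶠ L in atTop, |f L| ≤ C := (eventually_gt_atTop 0).mono hC
  exact exists_tendsto_atTop_of_finite_setOf_frequently_eq hc
    (isBoundedUnder_of_eventually_le (hbdd.mono fun _ h => (le_abs_self _).trans h))
    (isBoundedUnder_of_eventually_ge (hbdd.mono fun _ h => neg_le_of_abs_le h))
    hf.finite_setOf_frequently_eq

theorem Continuous.tendsto_apply₂ {α β γ δ : Type*} [TopologicalSpace β] [TopologicalSpace γ]
    [TopologicalSpace δ] {F : β → γ → δ} (hF : Continuous (Function.uncurry F)) {l : Filter α}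
    {f : α → β} {g : α → γ} {b : β} {c : γ} (hf : Tendsto f l (𝓝 b)) (hg : Tendsto g l (𝓝 c)) :
    Tendsto (fun a => F (f a) (g a)) l (𝓝 (F b c)) :=
  (hF.tendsto (b, c)).comp (hf.prodMk_nhds hg)

theorem Finset.prod_eq_prod_compl_mul_pow_mul_prod_div {ι F : Type*} [Fintype ι] [DecidableEq ι]
    [Field F] (s : Finset ι) (f : ι → F) {a : F} (ha : a ≠ 0) :
    ∏ i, f i = (∏ i ∈ sᶜ, f i) * (a ^ #s * ∏ i ∈ s, f i / a) := by
  rw [prod_div_distrib, prod_const, mul_div_cancel₀ _ (pow_ne_zero _ ha), prod_compl_mul_prod]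

theorem tendsto_rpow_mul_of_tendsto_mul_pow {y : ℝ → ℝ} {b : ℝ} {r : ℕ} (hr : r ≠ 0)
    (hy : ∀ᶠ L in atTop, 0 ≤ y L) (h : Tendsto (fun L => L * y L ^ r) atTop (𝓝 b)) :
    Tendsto (fun L => L ^ ((1 : ℝ) / r) * y L) atTop (𝓝 (b ^ ((1 : ℝ) / r))) := by
  refine ((Real.continuousAt_rpow_const b _ (Or.inr (by positivity))).tendsto.comp h).congr' ?_
  filter_upwards [hy, eventually_ge_atTop 0] with L hyL hL
  rw [Function.comp_apply, Real.mul_rpow hL (pow_nonneg hyL _), ← Real.rpow_natCast,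
    ← Real.rpow_mul hyL, mul_one_div_cancel (Nat.cast_ne_zero.2 hr), Real.rpow_one]

theorem exists_tendsto_rpow_mul_of_tendsto_mul_prod {ι : Type*} [Fintype ι] [DecidableEq ι]
    {f : ι → ℝ → ℝ} (hf : ∀ᶠ L in atTop, ∀ j, 0 < f j L) {I : Finset ι} {i₀ : ι} (hi₀ : i₀ ∈ I)
    (hprod : ∃ b, 0 < b ∧ Tendsto (fun L => L * ∏ j, f j L) atTop (𝓝 b))
    (hin : ∀ j ∈ I, ∃ ρ, 0 < ρ ∧ Tendsto (fun L => f j L / f i₀ L) atTop (𝓝 ρ))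
    (hout : ∀ j ∉ I, ∃ c, 0 < c ∧ Tendsto (f j) atTop (𝓝 c)) :
    ∀ i ∈ I, ∃ c, 0 < c ∧ Tendsto (fun L => L ^ ((1 : ℝ) / #I) * f i L) atTop (𝓝 c) := by
  obtain ⟨b, hb, hbL⟩ := hprod
  choose! ρ hρ hρL using hin
  choose! c hc hcL using hout
  set D := (∏ j ∈ Iᶜ, c j) * ∏ j ∈ I, ρ j
  have hD : 0 < D :=
    mul_pos (prod_pos fun j hj => hc j (mem_compl.1 hj)) (prod_pos fun j hj => hρ j hj)
  have hDL : Tendsto (fun L => (∏ j ∈ Iᶜ, f j L) * ∏ j ∈ I, f j L / f i₀ L) atTop (𝓝 D) :=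
    (tendsto_finsetProd _ fun j hj => hcL j (mem_compl.1 hj)).mul
      (tendsto_finsetProd _ fun j hj => hρL j hj)
  have hpow : Tendsto (fun L => L * f i₀ L ^ #I) atTop (𝓝 (b / D)) := by
    refine (hbL.div hDL hD.ne').congr' ?_
    filter_upwards [hf] with L hL
    have hA : ∏ j ∈ Iᶜ, f j L ≠ 0 := (prod_pos fun j _ => hL j).ne'
    have hB : ∏ j ∈ I, f j L / f i₀ L ≠ 0 := (prod_pos fun j _ => div_pos (hL j) (hL i₀)).ne'
    rw [Pi.div_apply, prod_eq_prod_compl_mul_pow_mul_prod_div I (fun j => f j L) (hL i₀).ne']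
    field_simp
  have hroot := tendsto_rpow_mul_of_tendsto_mul_pow (card_ne_zero.2 ⟨i₀, hi₀⟩)
    (hf.mono fun L hL => (hL i₀).le) hpow
  intro i hi
  refine ⟨ρ i * (b / D) ^ ((1 : ℝ) / #I),
    mul_pos (hρ i hi) (Real.rpow_pos_of_pos (div_pos hb hD) _), ((hρL i hi).mul hroot).congr' ?_⟩
  filter_upwards [hf] with L hL
  field_simp [(hL i₀).ne']

section PointEquations

variable {n : ℕ} (K0 : ℝ) (K K' : Fin (n+1) → ℝ)

def srlkCoeff (z : ℝ) (x : Fin (n+1) → ℝ) (j : Fin (n+1)) : ℝ :=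
  ∏ l ∈ Iio j, (K' l * x l) + K0 * z * ∏ l ∈ Iio j, (K l * x l)

/-- `N i = srlkLoad … i + δ + σ` (`srlkSteady.N_eq`). For `i = 0` the free `x 0` is the
empty-product term of `srlkCoeff … 0`, so it gets no separate `1`. -/
def srlkWeight (z : ℝ) (x : Fin (n+1) → ℝ) (i : Fin (n+1)) : ℝ :=
  (if i = 0 then 0 else 1) + srlkCoeff K0 K K' z x i

def srlkLoad (z : ℝ) (x : Fin (n+1) → ℝ) (i : Fin (n+1)) : ℝ :=
  x i * srlkWeight K0 K K' z x i + ∑ j ∈ Ioi i, x j * srlkCoeff K0 K K' z x j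

def srlkCofactor (z : ℝ) (x : Fin (n+1) → ℝ) (i l : Fin (n+1)) : ℝ :=
  K' i * ∏ m ∈ (Iio l).erase i, (K' m * x m)
    + K0 * z * (K i * ∏ m ∈ (Iio l).erase i, (K m * x m))

def srlkRatio (z : ℝ) (x : Fin (n+1) → ℝ) (i j : Fin (n+1)) : ℝ :=
  srlkWeight K0 K K' z x i + ∑ l ∈ Ioo i j, x l * srlkCofactor K0 K K' z x i l

variable {K0 K K'}

theorem srlkWeight_of_ne_zero {z : ℝ} {x : Fin (n+1) → ℝ} {i : Fin (n+1)} (hi : i ≠ 0) :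
    srlkWeight K0 K K' z x i = 1 + srlkCoeff K0 K K' z x i := by
  rw [srlkWeight, if_neg hi]

theorem srlkWeight_zero {z : ℝ} {x : Fin (n+1) → ℝ} :
    srlkWeight K0 K K' z x 0 = 1 + K0 * z := by
  have hIio : Iio (0 : Fin (n+1)) = ∅ := by ext; simp
  rw [srlkWeight, if_pos rfl, srlkCoeff, hIio, prod_empty, prod_empty]
  ring

theorem srlkSteady.N_eq {Nz L z : ℝ} {N x : Fin (n+1) → ℝ}
    (h : srlkSteady n K0 K K' Nz N L z x) (i : Fin (n+1)) :
    N i = srlkLoad K0 K K' z x i + srlkDelta n K' L x + srlkSigma n K0 K z L x := by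
  obtain ⟨-, h₀, hpos⟩ := h
  have hterm : ∀ j, x j * srlkCoeff K0 K K' z x j =
      (∏ l ∈ Iio j, (K' l * x l)) * x j + K0 * z * ((∏ l ∈ Iio j, (K l * x l)) * x j) :=
    fun j => by rw [srlkCoeff]; ring
  rcases eq_or_ne i 0 with rfl | hi
  · rw [h₀, srlkLoad, srlkWeight_zero, sum_congr rfl fun j _ => hterm j, sum_add_distrib,
      ← mul_sum]
    ring
  · have hterm' : ∀ j, (∏ l ∈ Iio j, (K' l * x l)) * x j
        + K0 * z * (∏ l ∈ Iio j, (K l * x l)) * x j = x j * srlkCoeff K0 K K' z x j :=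
      fun j => by rw [hterm]; ring
    rw [hpos i (Fin.pos_iff_ne_zero.2 hi), ← Ioi_insert, sum_insert notMem_Ioi_self,
      sum_congr rfl fun j _ => hterm' j, hterm', srlkLoad, srlkWeight_of_ne_zero hi]
    ring

theorem srlkCoeff_eq_mul_srlkCofactor (z : ℝ) (x : Fin (n+1) → ℝ) {i l : Fin (n+1)} (h : i < l) :
    srlkCoeff K0 K K' z x l = x i * srlkCofactor K0 K K' z x i l := by
  have hi : i ∈ Iio l := mem_Iio.2 h
  rw [srlkCoeff, srlkCofactor, ← mul_prod_erase _ _ hi,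
    ← mul_prod_erase _ (fun m => K m * x m) hi]
  ring

theorem eq_mul_srlkRatio_of_srlkLoad_eq {z : ℝ} {x : Fin (n+1) → ℝ} {i j : Fin (n+1)}
    (hij : i < j) (h : srlkLoad K0 K K' z x i = srlkLoad K0 K K' z x j) :
    x j = x i * srlkRatio K0 K K' z x i j := by
  have hj : j ≠ 0 := ((Fin.zero_le i).trans_lt hij).ne'
  have hIoi : Ioi i = Ioo i j ∪ Ici j := by
    ext l
    simp only [mem_Ioi, mem_union, mem_Ioo, mem_Ici]
    grind
  have hdisj : Disjoint (Ioo i j) (Ici j) := disjoint_left.2 fun l hl hl' =>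
    (mem_Ioo.1 hl).2.not_ge (mem_Ici.1 hl')
  have hIoo : ∑ l ∈ Ioo i j, x l * srlkCoeff K0 K K' z x l
      = x i * ∑ l ∈ Ioo i j, x l * srlkCofactor K0 K K' z x i l := by
    rw [mul_sum]
    refine sum_congr rfl fun l hl => ?_
    rw [srlkCoeff_eq_mul_srlkCofactor z x (mem_Ioo.1 hl).1]
    ring
  rw [srlkLoad, srlkLoad, hIoi, sum_union hdisj, ← Ioi_insert, sum_insert notMem_Ioi_self,
    srlkWeight_of_ne_zero hj] at h
  rw [srlkRatio, mul_add, ← hIoo]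
  linarith

theorem srlkLoad_eq_zero {z : ℝ} {x : Fin (n+1) → ℝ} {i : Fin (n+1)} (hi : x i = 0) :
    srlkLoad K0 K K' z x i = 0 := by
  rw [srlkLoad, hi, zero_mul, zero_add]
  refine sum_eq_zero fun j hj => ?_
  rw [srlkCoeff_eq_mul_srlkCofactor z x (mem_Ioi.1 hj), hi]
  ring

variable {z : ℝ} {x : Fin (n+1) → ℝ} (hK0 : 0 ≤ K0) (hK : ∀ i, 0 ≤ K i) (hK' : ∀ i, 0 ≤ K' i)
  (hz : 0 ≤ z) (hx : ∀ i, 0 ≤ x i)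
include hK0 hK hK' hz hx

theorem srlkCoeff_nonneg (j : Fin (n+1)) : 0 ≤ srlkCoeff K0 K K' z x j :=
  add_nonneg (prod_nonneg fun l _ => mul_nonneg (hK' l) (hx l))
    (mul_nonneg (mul_nonneg hK0 hz) (prod_nonneg fun l _ => mul_nonneg (hK l) (hx l)))

theorem srlkCofactor_nonneg (i l : Fin (n+1)) : 0 ≤ srlkCofactor K0 K K' z x i l :=
  add_nonneg (mul_nonneg (hK' i) (prod_nonneg fun m _ => mul_nonneg (hK' m) (hx m)))
    (mul_nonneg (mul_nonneg hK0 hz)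
      (mul_nonneg (hK i) (prod_nonneg fun m _ => mul_nonneg (hK m) (hx m))))

theorem one_le_srlkWeight (i : Fin (n+1)) : 1 ≤ srlkWeight K0 K K' z x i := by
  rcases eq_or_ne i 0 with rfl | hi
  · rw [srlkWeight_zero]
    linarith [mul_nonneg hK0 hz]
  · rw [srlkWeight_of_ne_zero hi]
    linarith [srlkCoeff_nonneg hK0 hK hK' hz hx i]

theorem le_srlkLoad (i : Fin (n+1)) : x i ≤ srlkLoad K0 K K' z x i := by
  have hw := one_le_srlkWeight hK0 hK hK' hz hx i
  have hsum : 0 ≤ ∑ j ∈ Ioi i, x j * srlkCoeff K0 K K' z x j :=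
    sum_nonneg fun j _ => mul_nonneg (hx j) (srlkCoeff_nonneg hK0 hK hK' hz hx j)
  rw [srlkLoad]
  nlinarith [hx i]

theorem one_le_srlkRatio (i j : Fin (n+1)) : 1 ≤ srlkRatio K0 K K' z x i j := by
  have hsum : 0 ≤ ∑ l ∈ Ioo i j, x l * srlkCofactor K0 K K' z x i l :=
    sum_nonneg fun l _ => mul_nonneg (hx l) (srlkCofactor_nonneg hK0 hK hK' hz hx i l)
  rw [srlkRatio]
  linarith [one_le_srlkWeight hK0 hK hK' hz hx i]

end PointEquations

section Continuity

variable {n : ℕ} (K0 : ℝ) (K K' : Fin (n+1) → ℝ)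

theorem continuous_srlkLoad (i : Fin (n+1)) :
    Continuous (Function.uncurry fun z x => srlkLoad K0 K K' z x i) := by
  unfold srlkLoad srlkWeight srlkCoeff; fun_prop

theorem continuous_srlkRatio (i j : Fin (n+1)) :
    Continuous (Function.uncurry fun z x => srlkRatio K0 K K' z x i j) := by
  unfold srlkRatio srlkWeight srlkCoeff srlkCofactor; fun_prop

end Continuity

theorem srlkSigma_mul_prod (n : ℕ) (K0 : ℝ) (K K' : Fin (n+1) → ℝ) (z L : ℝ)
    (x : Fin (n+1) → ℝ) :
    srlkSigma n K0 K z L x * ∏ j, K' j = K0 * (∏ j, K j) * z * srlkDelta n K' L x := by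
  simp only [srlkSigma, srlkDelta, prod_mul_distrib]
  ring

namespace SRLKBranch

variable {n : ℕ} {K0 Nz : ℝ} {K K' N : Fin (n+1) → ℝ} {z : ℝ → ℝ} {x : Fin (n+1) → ℝ → ℝ}

theorem exists_limits (hbr : SRLKBranch n K0 K K' Nz N z x) :
    ∃ (ζ : ℝ) (ξ : Fin (n+1) → ℝ) (d s : ℝ), Tendsto z atTop (𝓝 ζ) ∧
      (∀ i, Tendsto (x i) atTop (𝓝 (ξ i))) ∧
      Tendsto (fun L => srlkDelta n K' L fun i => x i L) atTop (𝓝 d) ∧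
      Tendsto (fun L => srlkSigma n K0 K (z L) L fun i => x i L) atTop (𝓝 s) := by
  have hprod : ∀ c : Fin (n+1) → ℝ, ContinuousOn (fun L => ∏ j, (c j * x j L)) (Set.Ioi 0) :=
    fun c => continuousOn_finsetProd _ fun j _ => continuousOn_const.mul (hbr.contX j)
  obtain ⟨ζ, hζ⟩ := hbr.algZ.exists_tendsto_atTop hbr.contZ hbr.bddZ
  choose ξ hξ using fun i => (hbr.algX i).exists_tendsto_atTop (hbr.contX i) (hbr.bddX i)
  obtain ⟨d, hd⟩ := hbr.algDelta.exists_tendsto_atTop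
    (continuousOn_id.mul (hprod K')) hbr.bddDelta
  obtain ⟨s, hs⟩ := hbr.algSigma.exists_tendsto_atTop
    (((continuousOn_const.mul hbr.contZ).mul continuousOn_id).mul (hprod K)) hbr.bddSigma
  exact ⟨ζ, ξ, d, s, hζ, hξ, hd, hs⟩

theorem limit_nonneg_z (hbr : SRLKBranch n K0 K K' Nz N z x) {ζ : ℝ}
    (hζ : Tendsto z atTop (𝓝 ζ)) : 0 ≤ ζ :=
  ge_of_tendsto hζ <| (eventually_gt_atTop 0).mono fun L hL => (hbr.posZ L hL).le

theorem limit_nonneg_x (hbr : SRLKBranch n K0 K K' Nz N z x) {i : Fin (n+1)} {ξ : ℝ}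
    (hξ : Tendsto (x i) atTop (𝓝 ξ)) : 0 ≤ ξ :=
  ge_of_tendsto hξ <| (eventually_gt_atTop 0).mono fun L hL => (hbr.posX i L hL).le

theorem N_eq_limit (hbr : SRLKBranch n K0 K K' Nz N z x) {ζ d s : ℝ} {ξ : Fin (n+1) → ℝ}
    (hζ : Tendsto z atTop (𝓝 ζ)) (hξ : ∀ i, Tendsto (x i) atTop (𝓝 (ξ i)))
    (hd : Tendsto (fun L => srlkDelta n K' L fun i => x i L) atTop (𝓝 d))
    (hs : Tendsto (fun L => srlkSigma n K0 K (z L) L fun i => x i L) atTop (𝓝 s))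
    (i : Fin (n+1)) : N i = srlkLoad K0 K K' ζ ξ i + d + s := by
  have hlim := (((continuous_srlkLoad K0 K K' i).tendsto_apply₂ hζ
    (tendsto_pi_nhds.2 hξ)).add hd).add hs
  refine tendsto_nhds_unique (tendsto_const_nhds.congr' ?_) hlim
  filter_upwards [eventually_gt_atTop 0] with L hL
  exact (hbr.steady L hL).N_eq i

theorem N_le_of_tendsto_zero (hbr : SRLKBranch n K0 K K' Nz N z x) (hK0 : 0 ≤ K0)
    (hK : ∀ i, 0 ≤ K i) (hK' : ∀ i, 0 ≤ K' i) {i : Fin (n+1)}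
    (hi : Tendsto (x i) atTop (𝓝 0)) (k : Fin (n+1)) : N i ≤ N k := by
  obtain ⟨ζ, ξ, d, s, hζ, hξ, hd, hs⟩ := hbr.exists_limits
  have hξ0 : ∀ j, 0 ≤ ξ j := fun j => hbr.limit_nonneg_x (hξ j)
  rw [hbr.N_eq_limit hζ hξ hd hs i, hbr.N_eq_limit hζ hξ hd hs k,
    srlkLoad_eq_zero (tendsto_nhds_unique (hξ i) hi)]
  linarith [le_srlkLoad hK0 hK hK' (hbr.limit_nonneg_z hζ) hξ0 k, hξ0 k]

theorem exists_pos_tendsto_of_lt (hbr : SRLKBranch n K0 K K' Nz N z x) (hK0 : 0 ≤ K0)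
    (hK : ∀ i, 0 ≤ K i) (hK' : ∀ i, 0 ≤ K' i) {i k : Fin (n+1)} (h : N k < N i) :
    ∃ c, 0 < c ∧ Tendsto (x i) atTop (𝓝 c) := by
  obtain ⟨-, ξ, -, -, -, hξ, -, -⟩ := hbr.exists_limits
  refine ⟨ξ i, (hbr.limit_nonneg_x (hξ i)).lt_of_ne fun h0 => ?_, hξ i⟩
  exact h.not_ge (hbr.N_le_of_tendsto_zero hK0 hK hK' (h0 ▸ hξ i) k)

theorem tendsto_div_of_lt (hbr : SRLKBranch n K0 K K' Nz N z x) {ζ : ℝ} {ξ : Fin (n+1) → ℝ}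
    (hζ : Tendsto z atTop (𝓝 ζ)) (hξ : ∀ i, Tendsto (x i) atTop (𝓝 (ξ i))) {i j : Fin (n+1)}
    (hij : i < j) (h : N i = N j) :
    Tendsto (fun L => x j L / x i L) atTop (𝓝 (srlkRatio K0 K K' ζ ξ i j)) := by
  refine ((continuous_srlkRatio K0 K K' i j).tendsto_apply₂ hζ (tendsto_pi_nhds.2 hξ)).congr' ?_
  filter_upwards [eventually_gt_atTop 0] with L hL
  have hN := (hbr.steady L hL).N_eq
  have hload : srlkLoad K0 K K' (z L) (fun k => x k L) i
      = srlkLoad K0 K K' (z L) (fun k => x k L) j := by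
    linarith [hN i, hN j]
  rw [eq_mul_srlkRatio_of_srlkLoad_eq hij hload, mul_div_cancel_left₀ _ (hbr.posX i L hL).ne']

theorem exists_tendsto_div (hbr : SRLKBranch n K0 K K' Nz N z x) (hK0 : 0 ≤ K0)
    (hK : ∀ i, 0 ≤ K i) (hK' : ∀ i, 0 ≤ K' i) {i j : Fin (n+1)} (h : N i = N j) :
    ∃ ρ, 0 < ρ ∧ Tendsto (fun L => x j L / x i L) atTop (𝓝 ρ) := by
  obtain ⟨ζ, ξ, -, -, hζ, hξ, -, -⟩ := hbr.exists_limits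
  have hratio : ∀ a b, 0 < srlkRatio K0 K K' ζ ξ a b := fun a b => one_pos.trans_le <|
    one_le_srlkRatio hK0 hK hK' (hbr.limit_nonneg_z hζ) (fun k => hbr.limit_nonneg_x (hξ k)) a b
  rcases lt_trichotomy i j with hij | rfl | hji
  · exact ⟨_, hratio i j, hbr.tendsto_div_of_lt hζ hξ hij h⟩
  · refine ⟨1, one_pos, tendsto_const_nhds.congr' ?_⟩
    filter_upwards [eventually_gt_atTop 0] with L hL
    exact (div_self (hbr.posX i L hL).ne').symm
  · refine ⟨_, inv_pos.2 (hratio j i), ?_⟩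
    simpa only [inv_div] using (hbr.tendsto_div_of_lt hζ hξ hji h.symm).inv₀ (hratio j i).ne'

theorem exists_tendsto_mul_prod (hbr : SRLKBranch n K0 K K' Nz N z x) (hK' : ∀ i, 0 < K' i)
    (hN : ∀ i, 0 < N i) :
    ∃ b, 0 < b ∧ Tendsto (fun L => L * ∏ j, x j L) atTop (𝓝 b) := by
  obtain ⟨ζ, ξ, d, s, hζ, hξ, hd, hs⟩ := hbr.exists_limits
  have hK'prod : 0 < ∏ j, K' j := prod_pos fun j _ => hK' j
  have hdelta : ∀ L, srlkDelta n K' L (fun i => x i L) = (∏ j, K' j) * (L * ∏ j, x j L) :=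
    fun L => by simp only [srlkDelta, prod_mul_distrib]; ring
  have hu : Tendsto (fun L => L * ∏ j, x j L) atTop (𝓝 (d / ∏ j, K' j)) :=
    (hd.div_const _).congr fun L => by rw [hdelta]; field_simp
  have hprod : ∏ j, ξ j = 0 := by
    refine tendsto_nhds_unique (tendsto_finsetProd _ fun j _ => hξ j) ?_
    simpa using (hu.mul tendsto_inv_atTop_zero).congr' <|
      (eventually_gt_atTop 0).mono fun L hL => by field_simp
  obtain ⟨i, -, hi⟩ := prod_eq_zero_iff.1 hprod
  have hNi : N i = d + s := by rw [hbr.N_eq_limit hζ hξ hd hs i, srlkLoad_eq_zero hi, zero_add]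
  have hs_eq : s * ∏ j, K' j = K0 * (∏ j, K j) * ζ * d :=
    tendsto_nhds_unique (hs.mul_const _) <| ((tendsto_const_nhds.mul hζ).mul hd).congr
      fun L => (srlkSigma_mul_prod n K0 K K' (z L) L _).symm
  have hd0 : 0 ≤ d := ge_of_tendsto hd <| (eventually_gt_atTop 0).mono fun L hL => by
    rw [hdelta]
    exact mul_nonneg hK'prod.le (mul_nonneg hL.le (prod_nonneg fun j _ => (hbr.posX j L hL).le))
  have hd_pos : 0 < d := by
    refine hd0.lt_of_ne fun h0 => (hN i).ne' ?_
    rw [← h0, mul_zero, mul_eq_zero] at hs_eq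
    rw [hNi, ← h0, hs_eq.resolve_right hK'prod.ne', add_zero]
  exact ⟨_, div_pos hd_pos hK'prod, hu⟩

end SRLKBranch

theorem srlk_multiple_limiting_components_general
    (n : ℕ) (K0 : ℝ) (K K' : Fin (n+1) → ℝ) (Nz : ℝ) (N : Fin (n+1) → ℝ)
    (hK0 : 0 < K0) (hK : ∀ i, 0 < K i) (hK' : ∀ i, 0 < K' i)
    (hN : ∀ i, 0 < N i)
    (z : ℝ → ℝ) (x : Fin (n+1) → ℝ → ℝ)
    (hbr : SRLKBranch n K0 K K' Nz N z x)
    (I : Finset (Fin (n+1))) (hne : I.Nonempty)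
    (N0 : ℝ)
    (hIeq : ∀ i ∈ I, N i = N0) (hIgt : ∀ i ∉ I, N0 < N i) :
    (∀ i ∈ I, ∃ c : ℝ, 0 < c ∧
      Filter.Tendsto (fun L : ℝ => L ^ ((1 : ℝ) / (I.card : ℝ)) * x i L)
        Filter.atTop (nhds c)) ∧
    (∀ i ∉ I, ∃ c : ℝ, 0 < c ∧
      Filter.Tendsto (x i) Filter.atTop (nhds c)) := by
  obtain ⟨i₀, hi₀⟩ := hne
  have hK0_nonneg := hK0.le
  have hK_nonneg : ∀ i, 0 ≤ K i := fun i => (hK i).le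
  have hK'_nonneg : ∀ i, 0 ≤ K' i := fun i => (hK' i).le
  have hout : ∀ i ∉ I, ∃ c, 0 < c ∧ Tendsto (x i) atTop (𝓝 c) := fun i hi =>
    hbr.exists_pos_tendsto_of_lt hK0_nonneg hK_nonneg hK'_nonneg
      ((hIeq i₀ hi₀).trans_lt (hIgt i hi))
  refine ⟨exists_tendsto_rpow_mul_of_tendsto_mul_prod ?_ hi₀ (hbr.exists_tendsto_mul_prod hK' hN)
    (fun j hj => hbr.exists_tendsto_div hK0_nonneg hK_nonneg hK'_nonneg
      ((hIeq i₀ hi₀).trans (hIeq j hj).symm)) hout, hout⟩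
  exact (eventually_gt_atTop 0).mono fun L hL j => hbr.posX j L hL

/-- along any SRLK steady-state branch whose limiting components form a
set `I` of cardinality `r ≥ 1`, one has `L^(1/r)·x_i(L) → c_i > 0` for `i ∈ I`, and
every `x_i` with `i ∉ I` tends to a strictly positive constant, as `L → +∞`. -/
theorem srlk_multiple_limiting_components
    (n : ℕ) (K0 : ℝ) (K K' : Fin (n+1) → ℝ) (Nz : ℝ) (N : Fin (n+1) → ℝ)
    (hK0 : 0 < K0) (hK : ∀ i, 0 < K i) (hK' : ∀ i, 0 < K' i)
    (hNz : 0 < Nz) (hN : ∀ i, 0 < N i)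
    (z : ℝ → ℝ) (x : Fin (n+1) → ℝ → ℝ)
    (hbr : SRLKBranch n K0 K K' Nz N z x)
    (I : Finset (Fin (n+1))) (hne : I.Nonempty)
    (N0 : ℝ) (hN0 : 0 < N0)
    (hIeq : ∀ i ∈ I, N i = N0) (hIgt : ∀ i ∉ I, N0 < N i) :
    (∀ i ∈ I, ∃ c : ℝ, 0 < c ∧
      Filter.Tendsto (fun L : ℝ => L ^ ((1 : ℝ) / (I.card : ℝ)) * x i L)
        Filter.atTop (nhds c)) ∧
    (∀ i ∉ I, ∃ c : ℝ, 0 < c ∧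
      Filter.Tendsto (x i) Filter.atTop (nhds c)) :=
  srlk_multiple_limiting_components_general n K0 K K' Nz N hK0 hK hK' hN z x hbr I hne N0 hIeq hIgt
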